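/- For all x, y ∈ ℝ, the functions b and s satisfy the identity b_{xx}(x,y)·b(x,y) − b_x(x,y)² = −s(−x,−y)·s(x,y). -/

import Mathlib

/-!
Write `W(f) = f'' f - f'^2 = f^2 (log f)''`. Logarithms turn products into sums, so
`W(u g) = g^2 W(u) + u^2 W(g)`. Split `b = u g` with the Gaussian `u = e^{-x²/2+y²}`, for which
`W(u) = -u^2`, and `g = (cosh(√3x) + 2 cos(√3y))/3`, for which `cosh² - sinh² = 1` gives
`W(g) = (1 + 2 cosh(√3x) cos(√3y))/3`. With `C = cosh(√3x)`, `c = cos(√3y)` and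
`sin² + cos² = 1`, the sum becomes `-(u^2/9) ((C - c)^2 - 3 sin^2(√3y))`, and this difference of
squares is `-s(-x,-y) s(x,y)`.
-/

/-- First partial derivative (with respect to the first variable) of a function of two
real variables. -/
noncomputable def pd1 (f : ℝ → ℝ → ℝ) (x y : ℝ) : ℝ := deriv (fun t => f t y) x

/-- Second partial derivative (with respect to the second variable) of a function of two
real variables. -/
noncomputable def pd2 (f : ℝ → ℝ → ℝ) (x y : ℝ) : ℝ := deriv (fun t => f x t) y

/-- The blow-up series `b(t₂,t₃)` of the U(3) blow-up formula for manifolds of simple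
type. -/
noncomputable def bFun (x y : ℝ) : ℝ :=
  (1 / 3) * Real.exp (-x ^ 2 / 2 + y ^ 2) *
    (Real.cosh (Real.sqrt 3 * x) + 2 * Real.cos (Real.sqrt 3 * y))

/-- The blow-up series `s(t₂,t₃)` of the U(3) blow-up formula for manifolds of simple
type. -/
noncomputable def sFun (x y : ℝ) : ℝ :=
  (1 / 3) * Real.exp (-x ^ 2 / 2 + y ^ 2) *
    (Real.cosh (Real.sqrt 3 * x) - Real.cos (Real.sqrt 3 * y) +
      Real.sqrt 3 * Real.sin (Real.sqrt 3 * y))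

open Real

noncomputable def selfWronskian (f : ℝ → ℝ) (x : ℝ) : ℝ :=
  deriv (deriv f) x * f x - deriv f x ^ 2

theorem selfWronskian_mul {f g : ℝ → ℝ} (hf : ContDiff ℝ 2 f) (hg : ContDiff ℝ 2 g) (x : ℝ) :
    selfWronskian (f * g) x =
      g x ^ 2 * selfWronskian f x + f x ^ 2 * selfWronskian g x := by
  have hf1 := hf.differentiable two_ne_zero
  have hg1 := hg.differentiable two_ne_zero
  have hderiv : deriv (f * g) = deriv f * g + f * deriv g :=
    funext fun t => ((hf1 t).hasDerivAt.mul (hg1 t).hasDerivAt).deriv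
  have hderiv2 := ((hf.differentiable_deriv_two x).hasDerivAt.mul (hg1 x).hasDerivAt).add
    ((hf1 x).hasDerivAt.mul (hg.differentiable_deriv_two x).hasDerivAt)
  simp only [selfWronskian, hderiv, hderiv2.deriv, Pi.mul_apply, Pi.add_apply]
  ring

theorem selfWronskian_exp {φ : ℝ → ℝ} (hφ : ContDiff ℝ 2 φ) (x : ℝ) :
    selfWronskian (fun t => exp (φ t)) x = exp (φ x) ^ 2 * deriv (deriv φ) x := by
  have hφ1 := hφ.differentiable two_ne_zero
  have hderiv : deriv (fun t => exp (φ t)) = (fun t => exp (φ t)) * deriv φ :=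
    funext fun t => deriv_exp (hφ1 t)
  have hderiv2 := (hφ1 x).hasDerivAt.exp.mul (hφ.differentiable_deriv_two x).hasDerivAt
  simp only [selfWronskian, hderiv, hderiv2.deriv, Pi.mul_apply]
  ring

theorem selfWronskian_gaussian (c x : ℝ) :
    selfWronskian (fun t => exp (-t ^ 2 / 2 + c)) x = -exp (-x ^ 2 / 2 + c) ^ 2 := by
  have hderiv : deriv (fun t : ℝ => -t ^ 2 / 2 + c) = fun t => -t := by
    funext t; simp; ring
  rw [selfWronskian_exp (by fun_prop), hderiv, deriv_neg']
  ring

theorem selfWronskian_cosh_affine (a c k x : ℝ) :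
    selfWronskian (fun t => c * cosh (a * t) + k) x = c * a ^ 2 * (c + k * cosh (a * x)) := by
  have hlin (t : ℝ) : HasDerivAt (fun t => a * t) a t := by
    simpa using (hasDerivAt_id t).const_mul a
  have hderiv : deriv (fun t => c * cosh (a * t) + k) = fun t => c * (sinh (a * t) * a) :=
    funext fun t => ((((hlin t).cosh).const_mul c).add_const k).deriv
  simp only [selfWronskian, hderiv, (((hlin x).sinh.mul_const a).const_mul c).deriv]
  linear_combination c ^ 2 * a ^ 2 * cosh_sq_sub_sinh_sq (a * x)

theorem stmt2 (x y : ℝ) :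
    pd1 (pd1 bFun) x y * bFun x y - (pd1 bFun x y) ^ 2 = -(sFun (-x) (-y) * sFun x y) := by
  have hb : (fun t => bFun t y) = (fun t => exp (-t ^ 2 / 2 + y ^ 2)) *
      fun t => 1 / 3 * cosh (√3 * t) + 2 / 3 * cos (√3 * y) := by
    funext t; simp only [bFun, Pi.mul_apply]; ring
  change selfWronskian (fun t => bFun t y) x = _
  rw [hb, selfWronskian_mul (by fun_prop) (by fun_prop), selfWronskian_gaussian,
    selfWronskian_cosh_affine]
  simp only [sFun, neg_sq, mul_neg, cosh_neg, cos_neg, sin_neg]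
  set E := exp (-x ^ 2 / 2 + y ^ 2)
  have h3 : √3 ^ 2 = 3 := sq_sqrt (by norm_num)
  linear_combination -(E ^ 2 / 3) * sin_sq_add_cos_sq (√3 * y) +
    E ^ 2 / 9 * (1 + 2 * cosh (√3 * x) * cos (√3 * y) - sin (√3 * y) ^ 2) * h3
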